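/- arXiv:1505.06332 — 2 statements merged into one kernel-verified Lean document; each statement's English description precedes it below -/
import Mathlib

section
/- If x is a point with a bounded infinite orbit under the outer billiard map about a lattice polygon (all vertices in ℤ²), then the orbit of x is periodic. -/
/-- If `x` has a bounded (infinite) orbit under the outer billiard map about a lattice
polygon — an injective map each of whose steps is a central reflection through a vertex
lying in `ℤ²` — then the orbit of `x` is periodic. -/
theorem latticePolygon_bounded_orbit_periodic
    (T : ℝ × ℝ → ℝ × ℝ) (hinj : Function.Injective T)
    (hrefl : ∀ y : ℝ × ℝ, ∃ v : ℤ × ℤ,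
      T y = (2 : ℝ) • (((v.1 : ℝ), (v.2 : ℝ)) : ℝ × ℝ) - y)
    (x : ℝ × ℝ) (hbdd : ∃ C : ℝ, ∀ n : ℕ, ‖T^[n] x‖ ≤ C) :
    ∃ n : ℕ, 0 < n ∧ T^[n] x = x := by
  obtain ⟨C, hC⟩ := hbdd
  -- Every iterate has the form (-1)^n • x + (integer vector).
  have key : ∀ n : ℕ, ∃ v : ℤ × ℤ,
      T^[n] x = ((-1 : ℝ) ^ n) • x + (((v.1 : ℝ), (v.2 : ℝ)) : ℝ × ℝ) := by
    intro n
    induction n with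
    | zero => exact ⟨(0, 0), by simp⟩
    | succ n ih =>
      obtain ⟨v, hv⟩ := ih
      obtain ⟨w, hw⟩ := hrefl (T^[n] x)
      refine ⟨(2 * w.1 - v.1, 2 * w.2 - v.2), ?_⟩
      rw [Function.iterate_succ_apply', hw, hv]
      push_cast
      ext <;> simp [Prod.smul_def, Prod.add_def, Prod.sub_def, pow_succ] <;> ring
  -- Bound on the integer vectors.
  set N : ℤ := ⌈C + ‖x‖⌉ with hN
  have hSfin : (Set.Icc ((-N, -N) : ℤ × ℤ) (N, N)).Finite := Set.finite_Icc _ _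
  -- The orbit lies in a finite set.
  set S : Set (ℝ × ℝ) :=
    (fun p : (ℝ × ℝ) × (ℤ × ℤ) => p.1 + (((p.2.1 : ℝ), (p.2.2 : ℝ)) : ℝ × ℝ)) ''
      (({x, -x} : Set (ℝ × ℝ)) ×ˢ Set.Icc ((-N, -N) : ℤ × ℤ) (N, N)) with hS
  have hSfin' : S.Finite :=
    Set.Finite.image _ (Set.Finite.prod (Set.toFinite _) hSfin)
  have hmem : ∀ n : ℕ, T^[n] x ∈ S := by
    intro n
    obtain ⟨v, hv⟩ := key n
    have hvx : (((v.1 : ℝ), (v.2 : ℝ)) : ℝ × ℝ) = T^[n] x - ((-1 : ℝ) ^ n) • x := by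
      rw [hv]; ring_nf
    have hnorm : ‖(((v.1 : ℝ), (v.2 : ℝ)) : ℝ × ℝ)‖ ≤ C + ‖x‖ := by
      rw [hvx]
      calc ‖T^[n] x - ((-1 : ℝ) ^ n) • x‖ ≤ ‖T^[n] x‖ + ‖((-1 : ℝ) ^ n) • x‖ :=
            norm_sub_le _ _
        _ ≤ C + ‖x‖ := by
            have : ‖((-1 : ℝ) ^ n) • x‖ = ‖x‖ := by
              rw [norm_smul]; simp
            rw [this]; exact add_le_add (hC n) le_rfl
    have h1 : |(v.1 : ℝ)| ≤ C + ‖x‖ := by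
      have := norm_fst_le (((v.1 : ℝ), (v.2 : ℝ)) : ℝ × ℝ)
      simp only [Real.norm_eq_abs] at this
      exact this.trans hnorm
    have h2 : |(v.2 : ℝ)| ≤ C + ‖x‖ := by
      have := norm_snd_le (((v.1 : ℝ), (v.2 : ℝ)) : ℝ × ℝ)
      simp only [Real.norm_eq_abs] at this
      exact this.trans hnorm
    have hv1 : -N ≤ v.1 ∧ v.1 ≤ N := by
      have hceil : (C + ‖x‖) ≤ (N : ℝ) := Int.le_ceil _
      constructor
      · have := (abs_le.mp (h1.trans hceil)).1
        exact_mod_cast this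
      · have := (abs_le.mp (h1.trans hceil)).2
        exact_mod_cast this
    have hv2 : -N ≤ v.2 ∧ v.2 ≤ N := by
      have hceil : (C + ‖x‖) ≤ (N : ℝ) := Int.le_ceil _
      constructor
      · have := (abs_le.mp (h2.trans hceil)).1
        exact_mod_cast this
      · have := (abs_le.mp (h2.trans hceil)).2
        exact_mod_cast this
    refine ⟨(((-1 : ℝ) ^ n) • x, v), ⟨?_, ?_⟩, hv.symm⟩
    · rcases Nat.even_or_odd n with h | h
      · left; rw [h.neg_one_pow]; simp
      · right; rw [h.neg_one_pow]; simp
    · exact ⟨⟨hv1.1, hv2.1⟩, ⟨hv1.2, hv2.2⟩⟩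
  -- Pigeonhole.
  have : Finite S := hSfin'.to_subtype
  obtain ⟨m, n, hmn, heq⟩ :=
    Finite.exists_ne_map_eq_of_infinite (fun n : ℕ => (⟨T^[n] x, hmem n⟩ : S))
  have heq' : T^[m] x = T^[n] x := congrArg Subtype.val heq
  -- wlog m < n
  rcases lt_or_gt_of_ne hmn with h | h
  · refine ⟨n - m, Nat.sub_pos_of_lt h, ?_⟩
    have : T^[m] (T^[n - m] x) = T^[m] x := by
      rw [← Function.iterate_add_apply, Nat.add_sub_cancel' h.le, heq']
    exact (hinj.iterate m) this
  · refine ⟨m - n, Nat.sub_pos_of_lt h, ?_⟩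
    have : T^[n] (T^[m - n] x) = T^[n] x := by
      rw [← Function.iterate_add_apply, Nat.add_sub_cancel' h.le, ← heq']
    exact (hinj.iterate n) this
end

section
/- For the outer billiard about the regular octagon, the periodic components of rank n obtained from a rank-0 orbit with rotation-counts (a₀, b₀, c₀) ∈ {(0,4,0), (8,0,0), (0,8,8)} by n applications of the substitution Γ have periods 4·9ⁿ, 12·9ⁿ − 4·(−3)ⁿ, and 12·9ⁿ + 4·(−3)ⁿ respectively; in particular all these periods are positive integers divisible by 4. -/
lemma octagon_odd_pows (n : ℕ) :
    (2 : ℤ) ∣ 3 * 9 ^ n - (-3 : ℤ) ^ n ∧ (2 : ℤ) ∣ 9 ^ n + (-3 : ℤ) ^ n := by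
  have o1 : Odd ((9 : ℤ) ^ n) := Odd.pow (⟨4, by norm_num⟩ : Odd (9 : ℤ))
  have o2 : Odd ((-3 : ℤ) ^ n) := Odd.pow (⟨-2, by norm_num⟩ : Odd (-3 : ℤ))
  obtain ⟨r, hr⟩ := o1
  obtain ⟨s, hs⟩ := o2
  constructor <;> [exact ⟨3 * r + 1 - s, by omega⟩; exact ⟨r + s + 1, by omega⟩]

lemma octagon_aux
    (a b c : ℕ → ℤ)
    (ha : ∀ k, a (k + 1) = 2 * a k + 2 * b k + 3 * c k)
    (hb : ∀ k, b (k + 1) = 8 * a k + 5 * b k)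
    (hc : ∀ k, c (k + 1) = 5 * a k + 2 * b k) (n : ℕ) :
    a n + b n + c n =
      (3 * 9 ^ n - (-3 : ℤ) ^ n) / 2 * a 0 + 9 ^ n * b 0 +
        (9 ^ n + (-3 : ℤ) ^ n) / 2 * c 0 ∧
    a n - c n = (-3 : ℤ) ^ n * (a 0 - c 0) := by
  induction n with
  | zero => norm_num
  | succ k ih =>
    obtain ⟨ihs, iht⟩ := ih
    obtain ⟨⟨p, hp⟩, ⟨q, hq⟩⟩ := octagon_odd_pows k
    have hpk : (3 * 9 ^ k - (-3 : ℤ) ^ k) / 2 = p := by omega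
    have hqk : ((9 : ℤ) ^ k + (-3 : ℤ) ^ k) / 2 = q := by omega
    have e1 : (3 : ℤ) * 9 ^ (k + 1) - (-3 : ℤ) ^ (k + 1)
        = 2 * (9 * p + 6 * (-3 : ℤ) ^ k) := by
      rw [pow_succ, pow_succ]; linarith
    have e2 : (9 : ℤ) ^ (k + 1) + (-3 : ℤ) ^ (k + 1)
        = 2 * (9 * q - 6 * (-3 : ℤ) ^ k) := by
      rw [pow_succ, pow_succ]; linarith
    have hpk1 : (3 * 9 ^ (k + 1) - (-3 : ℤ) ^ (k + 1)) / 2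
        = 9 * p + 6 * (-3 : ℤ) ^ k := by omega
    have hqk1 : ((9 : ℤ) ^ (k + 1) + (-3 : ℤ) ^ (k + 1)) / 2
        = 9 * q - 6 * (-3 : ℤ) ^ k := by omega
    rw [hpk, hqk] at ihs
    constructor
    · rw [ha k, hb k, hc k, hpk1, hqk1]
      linear_combination 9 * ihs + 6 * iht
    · rw [ha k, hc k]
      linear_combination (-3 : ℤ) * iht + (a 0 - c 0) * (pow_succ (-3 : ℤ) k).symm

/-- In the octagon renormalization scheme, a periodic orbit of rank `n` is described by
rotation counts `(aₙ, bₙ, cₙ)` evolving by `a_{k+1} = 2a_k + 2b_k + 3c_k`,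
`b_{k+1} = 8a_k + 5b_k`, `c_{k+1} = 5a_k + 2b_k`; its period is `aₙ + bₙ + cₙ`.  For the
rank-0 orbits with counts `(0,4,0)`, `(8,0,0)` and `(0,8,8)` the rank-`n` periods are
`4·9ⁿ`, `12·9ⁿ − 4·(−3)ⁿ` and `12·9ⁿ + 4·(−3)ⁿ` respectively; in particular all these
periods are positive and divisible by 4. -/
theorem octagon_rank_n_periods
    (a b c : ℕ → ℤ)
    (ha : ∀ k, a (k + 1) = 2 * a k + 2 * b k + 3 * c k)
    (hb : ∀ k, b (k + 1) = 8 * a k + 5 * b k)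
    (hc : ∀ k, c (k + 1) = 5 * a k + 2 * b k) (n : ℕ) :
    ((a 0, b 0, c 0) = ((0 : ℤ), (4 : ℤ), (0 : ℤ)) →
      a n + b n + c n = 4 * 9 ^ n) ∧
    ((a 0, b 0, c 0) = ((8 : ℤ), (0 : ℤ), (0 : ℤ)) →
      a n + b n + c n = 12 * 9 ^ n - 4 * (-3 : ℤ) ^ n) ∧
    ((a 0, b 0, c 0) = ((0 : ℤ), (8 : ℤ), (8 : ℤ)) →
      a n + b n + c n = 12 * 9 ^ n + 4 * (-3 : ℤ) ^ n) ∧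
    (0 < 4 * (9 : ℤ) ^ n ∧ (4 : ℤ) ∣ 4 * 9 ^ n) ∧
    (0 < 12 * (9 : ℤ) ^ n - 4 * (-3 : ℤ) ^ n ∧
      (4 : ℤ) ∣ 12 * 9 ^ n - 4 * (-3 : ℤ) ^ n) ∧
    (0 < 12 * (9 : ℤ) ^ n + 4 * (-3 : ℤ) ^ n ∧
      (4 : ℤ) ∣ 12 * 9 ^ n + 4 * (-3 : ℤ) ^ n) := by
  obtain ⟨hs, -⟩ := octagon_aux a b c ha hb hc n
  obtain ⟨⟨p, hp⟩, ⟨q, hq⟩⟩ := octagon_odd_pows n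
  have hpk : (3 * 9 ^ n - (-3 : ℤ) ^ n) / 2 = p := by omega
  have hqk : ((9 : ℤ) ^ n + (-3 : ℤ) ^ n) / 2 = q := by omega
  rw [hpk, hqk] at hs
  have habs : |(-3 : ℤ) ^ n| ≤ 9 ^ n := by
    rw [abs_pow]
    calc |(-3 : ℤ)| ^ n = 3 ^ n := by norm_num
    _ ≤ 9 ^ n := pow_le_pow_left₀ (by norm_num) (by norm_num) n
  have hb1 : (-3 : ℤ) ^ n ≤ 9 ^ n := le_trans (le_abs_self _) habs
  have hb2 : -(9 : ℤ) ^ n ≤ (-3 : ℤ) ^ n := by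
    have := neg_abs_le ((-3 : ℤ) ^ n); linarith
  have h9pos : (0 : ℤ) < 9 ^ n := pow_pos (by norm_num) n
  refine ⟨?_, ?_, ?_, ⟨by positivity, ⟨9 ^ n, by ring⟩⟩,
    ⟨by linarith, ⟨3 * 9 ^ n - (-3) ^ n, by ring⟩⟩,
    ⟨by linarith, ⟨3 * 9 ^ n + (-3) ^ n, by ring⟩⟩⟩ <;>
  · intro h
    simp only [Prod.mk.injEq] at h
    obtain ⟨h1, h2, h3⟩ := h
    rw [h1, h2, h3] at hs
    linarith
end
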